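/- Let 𝒯 = {T♭, T†, T‡, T♯} and let 𝒯_k be its iterates. Then for every k ≥ 0, the map T ↦ δ(T) sends 𝒯_k onto the full range of integers I_k = {3·2^k+k+1, 3·2^k+k+2, …, 6·2^k+k+1}; that is, every integer d with 3·2^k+k+1 ≤ d ≤ 6·2^k+k+1 equals δ(T) for some T ∈ 𝒯_k. -/
import Mathlib


/-- The three-letter alphabet `S = {0, 1, ∗}`. -/
inductive Tern | zero | one | star
deriving DecidableEq, Repr

/-- A string over `S`. -/
abbrev Str := List Tern

/-- A (ordered) list of strings over `S`. -/
abbrev SList := List Str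

/-- `clash x y` is true iff both `x, y ∈ {0,1}` and `x ≠ y`. -/
def clash : Tern → Tern → Bool
  | Tern.zero, Tern.one => true
  | Tern.one, Tern.zero => true
  | _, _ => false

/-- `dist u v`: the number of positions where both letters are binary and differ. -/
def distS (u v : Str) : ℕ := (u.zip v).countP (fun p => clash p.1 p.2)

/-- all strings of a list have length `m` -/
def uniform (L : SList) (m : ℕ) : Prop := ∀ s ∈ L, s.length = m

/-- A list is `k`-neighborly if any two entries occupying distinct positions `u, v`
satisfy `1 ≤ dist(u,v) ≤ k`. -/
def kNbr (k : ℕ) (L : SList) : Prop :=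
  L.Pairwise (fun u v => 1 ≤ distS u v ∧ distS u v ≤ k)

/-- The pairing `A ⊖ B`: entrywise concatenation of strings. -/
def pairL (A B : SList) : SList := List.zipWith (· ++ ·) A B

/-- The concatenation `AB = [v_i w_j]`, ordered lexicographically in `(i,j)`. -/
def concL (A B : SList) : SList := A.flatMap (fun u => B.map (fun v => u ++ v))

/-- the string `∗^m` of `m` jokers -/
def stars (m : ℕ) : Str := List.replicate m Tern.star

/-- A triple of lists `T = (A,B,C)` together with the (intended common) string
lengths `a` of the entries of `A` and `b` of the entries of `B` (and `C`). -/
structure Triple where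
  a : ℕ
  b : ℕ
  A : SList
  B : SList
  C : SList

namespace Triple

/-- `α(T)`: the common length of the strings of `A`. -/
def alpha (T : Triple) : ℕ := T.a

/-- `β(T)`: the common length of the strings of `B`. -/
def beta (T : Triple) : ℕ := T.b

/-- `δ(T) = α(T) + β(T)`. -/
def delta (T : Triple) : ℕ := T.a + T.b

/-- `n(T) = |A|`. -/
def nT (T : Triple) : ℕ := T.A.length

/-- `g(T) = |C|`. -/
def gT (T : Triple) : ℕ := T.C.length

/-- A triple `T = (A,B,C)` is nice if: (1) `dist(u,v) ≤ 1` for all entries `u,v` of `A`;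
(2) `|A| = |B|` and `A ⊖ B` is 2-neighborly; (3) `C` is a 1-neighborly sublist of `B`,
and `dist(u,v) ≤ 1` for every entry `u` of `B` and every entry `v` of `C`.
(The strings of `A` all have length `α(T)` and those of `B` length `β(T)`.) -/
def Nice (T : Triple) : Prop :=
  uniform T.A T.a ∧ uniform T.B T.b ∧
  (∀ u ∈ T.A, ∀ v ∈ T.A, distS u v ≤ 1) ∧
  T.A.length = T.B.length ∧
  kNbr 2 (pairL T.A T.B) ∧
  T.C.Sublist T.B ∧ kNbr 1 T.C ∧
  (∀ u ∈ T.B, ∀ v ∈ T.C, distS u v ≤ 1)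

/-- `T, T'` are concordant if `α(T) = α(T')` and `dist(u,v) ≤ 1` for all entries
`u, v` of `A + A'`. -/
def Concordant (T T' : Triple) : Prop :=
  T.a = T'.a ∧ ∀ u ∈ T.A ++ T'.A, ∀ v ∈ T.A ++ T'.A, distS u v ≤ 1

/-- The compound `T ⊗ T' = (A'', B'', C'')` where
`A'' = [0]A + [0]A' + (|C|·|C'|)·([1][∗^{α(T)}])`,
`B'' = [0]B[∗^{β(T')}] + [1][∗^{β(T)}]B' + [∗]CC'`,
`C'' = [0]C[∗^{β(T')}] + [1][∗^{β(T)}]C'`. -/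
def compound (T T' : Triple) : Triple where
  a := T.a + 1
  b := T.b + T'.b + 1
  A := (T.A.map (fun u => Tern.zero :: u)) ++ (T'.A.map (fun u => Tern.zero :: u)) ++
       List.replicate (T.C.length * T'.C.length) (Tern.one :: stars T.a)
  B := (T.B.map (fun u => Tern.zero :: (u ++ stars T'.b))) ++
       (T'.B.map (fun u => Tern.one :: (stars T.b ++ u))) ++
       ((concL T.C T'.C).map (fun u => Tern.star :: u))
  C := (T.C.map (fun u => Tern.zero :: (u ++ stars T'.b))) ++
       (T'.C.map (fun u => Tern.one :: (stars T.b ++ u)))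

/-- `T, T'` are congruent if they are concordant, `β(T) = β(T')`, `n(T) = n(T')`
and `g(T) = g(T')`. -/
def Congruent (T T' : Triple) : Prop :=
  Concordant T T' ∧ T.b = T'.b ∧ T.A.length = T'.A.length ∧ T.C.length = T'.C.length

end Triple

namespace Triple

/-- the iterates `T_0 = T`, `T_{k+1} = T_k ⊗ T_k` -/
def iterT (T : Triple) : ℕ → Triple
  | 0 => T
  | k + 1 => compound (iterT T k) (iterT T k)

end Triple

open Tern in
/-- `G = [0, 1]` -/
def Glist : SList := [[zero], [one]]

open Tern in
/-- `H = [00, 01, 1∗]` -/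
def Hlist : SList := [[zero, zero], [zero, one], [one, star]]

open Tern in
/-- `L = [000, 001, 01∗, 1∗∗]` -/
def Llist : SList := [[zero, zero, zero], [zero, zero, one], [zero, one, star], [one, star, star]]

open Tern in
/-- `T♭ = (3·[00] + 3·[01] + 3·[1∗], 3·H, H)`. -/
def Tflat : Triple :=
  ⟨2, 2,
    List.replicate 3 [zero, zero] ++ List.replicate 3 [zero, one] ++
      List.replicate 3 [one, star],
    (List.replicate 3 Hlist).flatten,
    Hlist⟩

open Tern in
/-- `T♯ = (2·(3·[00] + 3·[01]) + 9·[1∗], 2·([0]H[∗∗]) + 2·([1][∗∗]H) + [∗]HH,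
[0]H[∗∗] + [1][∗∗]H)`. -/
def Tsharp : Triple :=
  ⟨2, 5,
    (List.replicate 2 (List.replicate 3 [zero, zero] ++ List.replicate 3 [zero, one])).flatten ++
      List.replicate 9 [one, star],
    (List.replicate 2 (Hlist.map (fun u => zero :: (u ++ [star, star])))).flatten ++
      (List.replicate 2 (Hlist.map (fun u => one :: ([star, star] ++ u)))).flatten ++
      (concL Hlist Hlist).map (fun u => star :: u),
    Hlist.map (fun u => zero :: (u ++ [star, star])) ++
      Hlist.map (fun u => one :: ([star, star] ++ u))⟩

open Tern in
/-- `T† = (4·[00] + 4·[01] + 4·[1∗], 3·L, L)`. -/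
def Tdag : Triple :=
  ⟨2, 3,
    List.replicate 4 [zero, zero] ++ List.replicate 4 [zero, one] ++
      List.replicate 4 [one, star],
    (List.replicate 3 Llist).flatten,
    Llist⟩

open Tern in
/-- `T‡ = (2·[00] + 2·[01] + 3·[00] + 3·[01] + 6·[1∗],
2·([0]G[∗∗]) + 2·([1][∗]H) + [∗]GH, [0]G[∗∗] + [1][∗]H)`. -/
def Tddag : Triple :=
  ⟨2, 4,
    List.replicate 2 [zero, zero] ++ List.replicate 2 [zero, one] ++
      List.replicate 3 [zero, zero] ++ List.replicate 3 [zero, one] ++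
      List.replicate 6 [one, star],
    (List.replicate 2 (Glist.map (fun u => zero :: (u ++ [star, star])))).flatten ++
      (List.replicate 2 (Hlist.map (fun u => one :: (star :: u)))).flatten ++
      (concL Glist Hlist).map (fun u => star :: u),
    Glist.map (fun u => zero :: (u ++ [star, star])) ++
      Hlist.map (fun u => one :: (star :: u))⟩

namespace Triple

/-- the iterates `𝒮_0 = 𝒮`, `𝒮_{k+1} = {S ⊗ T : S, T ∈ 𝒮_k}` of a set of triples -/
def iterS (𝒮 : Set Triple) : ℕ → Set Triple
  | 0 => 𝒮
  | k + 1 => Set.image2 compound (iterS 𝒮 k) (iterS 𝒮 k)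

end Triple

/-- `𝒯 = {T♭, T†, T‡, T♯}` -/
def familyT : Set Triple := {Tflat, Tdag, Tddag, Tsharp}

open Triple in
lemma key_delta (k : ℕ) : ∀ b : ℕ, 3 * 2 ^ k ≤ b + 1 → b + 1 ≤ 6 * 2 ^ k →
    ∃ T ∈ iterS familyT k, T.a = k + 2 ∧ T.b = b := by
  induction k with
  | zero =>
    intro b hb1 hb2
    simp only [pow_zero, mul_one] at hb1 hb2
    have hb : b = 2 ∨ b = 3 ∨ b = 4 ∨ b = 5 := by omega
    rcases hb with rfl | rfl | rfl | rfl
    · exact ⟨Tflat, Or.inl rfl, rfl, rfl⟩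
    · exact ⟨Tdag, Or.inr (Or.inl rfl), rfl, rfl⟩
    · exact ⟨Tddag, Or.inr (Or.inr (Or.inl rfl)), rfl, rfl⟩
    · exact ⟨Tsharp, Or.inr (Or.inr (Or.inr rfl)), rfl, rfl⟩
  | succ k ih =>
    intro b hb1 hb2
    have hP : 1 ≤ 2 ^ k := Nat.one_le_two_pow
    rw [pow_succ] at hb1 hb2
    set P := 2 ^ k with hPdef
    obtain ⟨b1, b2, hsum, h11, h12, h21, h22⟩ :
        ∃ b1 b2 : ℕ, b = b1 + b2 + 1 ∧ 3 * P ≤ b1 + 1 ∧ b1 + 1 ≤ 6 * P ∧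
          3 * P ≤ b2 + 1 ∧ b2 + 1 ≤ 6 * P := by
      rcases le_total (b - (6 * P - 1) - 1) (3 * P - 1) with h | h
      · exact ⟨3 * P - 1, b - (3 * P - 1) - 1, by omega, by omega, by omega, by omega, by omega⟩
      · exact ⟨6 * P - 1, b - (6 * P - 1) - 1, by omega, by omega, by omega, by omega, by omega⟩
    obtain ⟨T1, hT1, ha1, hbb1⟩ := ih b1 h11 h12
    obtain ⟨T2, hT2, ha2, hbb2⟩ := ih b2 h21 h22
    refine ⟨compound T1 T2, Set.mem_image2_of_mem hT1 hT2, ?_, ?_⟩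
    · simp [compound, ha1]
    · simp [compound, hbb1, hbb2, hsum]


open Triple in
/-- For every `k ≥ 0`, the map `T ↦ δ(T)` sends the `k`-th iterate of
`𝒯 = {T♭, T†, T‡, T♯}` onto the full range `{3·2^k+k+1, …, 6·2^k+k+1}`: every
integer `d` with `3·2^k+k+1 ≤ d ≤ 6·2^k+k+1` equals `δ(T)` for some `T ∈ 𝒯_k`. -/
theorem delta_onto_range (k d : ℕ) (h1 : 3 * 2 ^ k + k + 1 ≤ d)
    (h2 : d ≤ 6 * 2 ^ k + k + 1) :
    ∃ T ∈ iterS familyT k, delta T = d := by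
  have hP : 1 ≤ 2 ^ k := Nat.one_le_two_pow
  obtain ⟨T, hT, ha, hb⟩ := key_delta k (d - k - 2) (by omega) (by omega)
  refine ⟨T, hT, ?_⟩
  simp only [delta, ha, hb]
  omega
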